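/- Let S = ℂ^n with standard idempotents e_1,…,e_n and, for i ≠ j, y^{ij} := d_{e_i⊗e_j}. Let α_{ij} ∈ ℂ for 1 ≤ i < j ≤ n and set P = ∑_{i<j} α_{ij} y^{ij} y^{ji}. Then the associated double bracket ⟨⟨−,−⟩⟩_P is a double Poisson bracket on ℂ^n (i.e., satisfies the double Jacobi identity) if and only if for all i < j < k: α_{ij} α_{ik} + α_{ik} α_{jk} − α_{ij} α_{jk} = 0. -/

import Mathlib

open TensorProduct

set_option synthInstance.maxHeartbeats 1000000
set_option maxHeartbeats 1000000

noncomputable section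

/-- The semisimple algebra `S = ℂ ⊕ ⋯ ⊕ ℂ` (`n` copies). -/
abbrev SC (n : ℕ) : Type := Fin n → ℂ

variable (n : ℕ)

/-- `θ` is a double derivation for the outer bimodule structure on `S ⊗ S`. -/
def IsDD (θ : SC n →ₗ[ℂ] SC n ⊗[ℂ] SC n) : Prop :=
  ∀ a b : SC n,
    θ (a * b) = (a ⊗ₜ[ℂ] (1 : SC n)) * θ b + θ a * ((1 : SC n) ⊗ₜ[ℂ] b)

/-- The space of double derivations `DDer(S)`. -/
def DDer : Submodule ℂ (SC n →ₗ[ℂ] SC n ⊗[ℂ] SC n) where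
  carrier := {θ | IsDD n θ}
  add_mem' := by
    intro θ η hθ hη a b
    simp only [LinearMap.add_apply, hθ a b, hη a b, mul_add, add_mul]
    abel
  zero_mem' := by intro a b; simp
  smul_mem' := by
    intro c θ hθ a b
    simp only [LinearMap.smul_apply, hθ a b, smul_add, mul_smul_comm, smul_mul_assoc]

/-- The map `u ↦ (1 ⊗ s) * u * (t ⊗ 1)`, realizing the inner bimodule action
`(s·θ·t)(u) = θ(u)' t ⊗ s θ(u)''` after composition with `θ`. -/
def innerMap (s t : SC n) : SC n ⊗[ℂ] SC n →ₗ[ℂ] SC n ⊗[ℂ] SC n :=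
  (LinearMap.mulRight ℂ (t ⊗ₜ[ℂ] (1 : SC n))).comp
    (LinearMap.mulLeft ℂ ((1 : SC n) ⊗ₜ[ℂ] s))

lemma innerMap_isDD (s t : SC n) (θ : SC n →ₗ[ℂ] SC n ⊗[ℂ] SC n)
    (hθ : IsDD n θ) : IsDD n ((innerMap n s t).comp θ) := by
  intro a b
  have h1 : ((1 : SC n) ⊗ₜ[ℂ] s) * (a ⊗ₜ[ℂ] (1 : SC n))
      = (a ⊗ₜ[ℂ] (1 : SC n)) * ((1 : SC n) ⊗ₜ[ℂ] s) := by
    simp [Algebra.TensorProduct.tmul_mul_tmul]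
  have h2 : ((1 : SC n) ⊗ₜ[ℂ] b) * (t ⊗ₜ[ℂ] (1 : SC n))
      = (t ⊗ₜ[ℂ] (1 : SC n)) * ((1 : SC n) ⊗ₜ[ℂ] b) := by
    simp [Algebra.TensorProduct.tmul_mul_tmul]
  simp only [LinearMap.comp_apply, hθ a b, innerMap, LinearMap.mulLeft_apply,
    LinearMap.mulRight_apply, mul_add, add_mul]
  congr 1
  · simp only [mul_assoc]
    rw [← mul_assoc, h1, mul_assoc]
  · simp only [mul_assoc]
    rw [h2]

/-- The inner `S`-bimodule action on `DDer(S)`:  `(s·θ·t)(u) = θ(u)' t ⊗ s θ(u)''`. -/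
def innerDD (s t : SC n) (θ : DDer n) : DDer n :=
  ⟨(innerMap n s t).comp θ.1, innerMap_isDD n s t θ.1 θ.2⟩

/-- The `i`-th standard orthogonal idempotent `e_i` of `ℂ^n`. -/
def eC (i : Fin n) : SC n := Pi.single i 1

/-- The inner double derivation `d_x(y) = x (1 ⊗ y) - (y ⊗ 1) x`. -/
def dIn (x : SC n ⊗[ℂ] SC n) : SC n →ₗ[ℂ] SC n ⊗[ℂ] SC n :=
  (LinearMap.mulLeft ℂ x).comp (TensorProduct.mk ℂ (SC n) (SC n) 1)
    - (LinearMap.mulRight ℂ x).comp ((TensorProduct.mk ℂ (SC n) (SC n)).flip 1)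

lemma dIn_isDD (x : SC n ⊗[ℂ] SC n) : IsDD n (dIn n x) := by
  intro a b
  simp only [dIn, LinearMap.sub_apply, LinearMap.comp_apply, TensorProduct.mk_apply,
    LinearMap.flip_apply, LinearMap.mulLeft_apply, LinearMap.mulRight_apply, mul_sub, sub_mul]
  have h1 : ((1 : SC n) ⊗ₜ[ℂ] (a * b)) = ((1 : SC n) ⊗ₜ[ℂ] a) * ((1 : SC n) ⊗ₜ[ℂ] b) := by
    simp [Algebra.TensorProduct.tmul_mul_tmul]
  have h2 : ((a * b) ⊗ₜ[ℂ] (1 : SC n)) = (a ⊗ₜ[ℂ] (1 : SC n)) * (b ⊗ₜ[ℂ] (1 : SC n)) := by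
    simp [Algebra.TensorProduct.tmul_mul_tmul]
  have h3 : (a ⊗ₜ[ℂ] (1 : SC n)) * ((1 : SC n) ⊗ₜ[ℂ] b) = a ⊗ₜ[ℂ] b := by
    simp [Algebra.TensorProduct.tmul_mul_tmul]
  have h4 : ((1 : SC n) ⊗ₜ[ℂ] a) * (b ⊗ₜ[ℂ] (1 : SC n)) = b ⊗ₜ[ℂ] a := by
    simp [Algebra.TensorProduct.tmul_mul_tmul]
  rw [h1, h2]
  simp only [mul_assoc]
  abel


/-- The inner double derivation `y^{ij} = d_{e_i ⊗ e_j}`. -/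
def yC (i j : Fin n) : SC n →ₗ[ℂ] SC n ⊗[ℂ] SC n := dIn n (eC n i ⊗ₜ[ℂ] eC n j)

/-- Auxiliary bilinear map `(x, y) ↦ (w ↦ (1 ⊗ x) * w * (y ⊗ 1))`, used to multiply Sweedler
components: on pure tensors it sends `(x ⊗ y, u ⊗ v)` to `(u y) ⊗ (x v)`. -/
def mixAux (n : ℕ) :
    SC n →ₗ[ℂ] SC n →ₗ[ℂ] (SC n ⊗[ℂ] SC n →ₗ[ℂ] SC n ⊗[ℂ] SC n) :=
  LinearMap.mk₂ ℂ
    (fun x y => (LinearMap.mulRight ℂ (y ⊗ₜ[ℂ] (1 : SC n))).comp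
      (LinearMap.mulLeft ℂ ((1 : SC n) ⊗ₜ[ℂ] x)))
    (fun x x' y => by
      ext w
      simp [TensorProduct.tmul_add, add_mul])
    (fun c x y => by
      ext w
      simp [TensorProduct.tmul_smul, smul_mul_assoc])
    (fun x y y' => by
      ext w
      simp [TensorProduct.add_tmul, mul_add])
    (fun c x y => by
      ext w
      simp [TensorProduct.smul_tmul', mul_smul_comm])

/-- `mixer z w` is, for `z = x ⊗ y` and `w = u ⊗ v`, the element `(u y) ⊗ (x v)`. -/
def mixer (n : ℕ) :
    SC n ⊗[ℂ] SC n →ₗ[ℂ] (SC n ⊗[ℂ] SC n →ₗ[ℂ] SC n ⊗[ℂ] SC n) :=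
  TensorProduct.lift (mixAux n)

/-- The double bracket associated to an ordered monomial `P = θ η` of double derivations:
`⟨⟨x,y⟩⟩_P = η(y)′ θ(x)″ ⊗ θ(x)′ η(y)″ − θ(y)′ η(x)″ ⊗ η(x)′ θ(y)″`. -/
def bracketP (n : ℕ) (θ η : SC n →ₗ[ℂ] SC n ⊗[ℂ] SC n) (x y : SC n) :
    SC n ⊗[ℂ] SC n :=
  mixer n (θ x) (η y) - mixer n (η x) (θ y)

/-- The double bracket `⟨⟨−,−⟩⟩_P` of `P = θ η` as a bilinear map. -/
def bracketOf (n : ℕ) (θ η : SC n →ₗ[ℂ] SC n ⊗[ℂ] SC n) :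
    SC n →ₗ[ℂ] SC n →ₗ[ℂ] SC n ⊗[ℂ] SC n :=
  LinearMap.mk₂ ℂ (fun x y => bracketP n θ η x y)
    (fun x x' y => by simp only [bracketP, map_add, LinearMap.add_apply]; abel)
    (fun c x y => by simp only [bracketP, map_smul, LinearMap.smul_apply, smul_sub])
    (fun x y y' => by simp only [bracketP, map_add]; abel)
    (fun c x y => by simp only [bracketP, map_smul, smul_sub])

/-- `σ(x ⊗ y ⊗ z) = z ⊗ x ⊗ y` on `S ⊗ S ⊗ S`. -/
def sigma3 (n : ℕ) :
    (SC n ⊗[ℂ] SC n) ⊗[ℂ] SC n →ₗ[ℂ] (SC n ⊗[ℂ] SC n) ⊗[ℂ] SC n :=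
  (TensorProduct.assoc ℂ (SC n) (SC n) (SC n)).symm.toLinearMap.comp
    (TensorProduct.comm ℂ (SC n ⊗[ℂ] SC n) (SC n)).toLinearMap

/-- The double Jacobi identity
`⟨⟨a,⟨⟨b,c⟩⟩⟩⟩_L + σ(⟨⟨b,⟨⟨c,a⟩⟩⟩⟩_L) + σ²(⟨⟨c,⟨⟨a,b⟩⟩⟩⟩_L) = 0`,
where `⟨⟨a, u ⊗ v⟩⟩_L = ⟨⟨a, u⟩⟩ ⊗ v`. -/
def DoubleJacobi (n : ℕ) (B : SC n →ₗ[ℂ] SC n →ₗ[ℂ] SC n ⊗[ℂ] SC n) : Prop :=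
  ∀ a b c : SC n,
    TensorProduct.map (B a) LinearMap.id (B b c)
      + sigma3 n (TensorProduct.map (B b) LinearMap.id (B c a))
      + sigma3 n (sigma3 n (TensorProduct.map (B c) LinearMap.id (B a b))) = 0

/-!
Each summand is explicit: `⟨⟨a,b⟩⟩_{y^{ij}y^{ji}} = (a_j - a_i)(b_j - b_i)(e_i⊗e_j - e_j⊗e_i)`,
so `⟨⟨a,b⟩⟩_P = ∑_{p,q} A_{pq} (a_q - a_p)(b_q - b_p) e_p⊗e_q` with `A` the skew-symmetric
extension of `α`. The `e_p⊗e_q⊗e_r`-coordinate of the Jacobiator then factors as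
`(a_q - a_p)(b_r - b_q)(c_r - c_p) · K_{pqr}` with
`K_{pqr} = A_{pq}A_{qr} - A_{pq}A_{pr} - A_{pr}A_{qr}`. The first factor vanishes unless
`p, q, r` are distinct, and equals `1` for `a = e_q`, `b = c = e_r`; so the double Jacobi identity
holds iff `K` vanishes on distinct triples. `K` is symmetric in its three indices, and for
`i < j < k` it is minus the expression in the statement.
-/

section SkewExtension

variable {ι R : Type*} [LinearOrder ι]

def skewExtend [Ring R] (α : ι → ι → R) (p q : ι) : R :=
  if p < q then α p q else if q < p then -α q p else 0

lemma skewExtend_of_lt [Ring R] (α : ι → ι → R) {p q : ι} (h : p < q) :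
    skewExtend α p q = α p q := if_pos h

lemma skewExtend_swap [Ring R] (α : ι → ι → R) (p q : ι) :
    skewExtend α q p = -skewExtend α p q := by
  rcases lt_trichotomy p q with h | h | h <;> simp [skewExtend, h, not_lt_of_gt]

lemma sum_ite_lt_smul_sub [Fintype ι] [Ring R] {M : Type*} [AddCommGroup M] [Module R M]
    (α : ι → ι → R) (g : ι → ι → M) :
    ∑ i, ∑ j, (if i < j then α i j • (g i j - g j i) else 0)
      = ∑ p, ∑ q, skewExtend α p q • g p q := by
  have skew_smul_eq : ∀ p q, skewExtend α p q • g p q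
      = (if p < q then α p q • g p q else 0) + if q < p then -(α q p • g p q) else 0 := by
    intro p q
    rcases lt_trichotomy p q with h | h | h <;> simp [skewExtend, h, not_lt_of_gt]
  simp only [skew_smul_eq, Finset.sum_add_distrib]
  rw [Finset.sum_comm (f := fun p q => if q < p then -(α q p • g p q) else 0),
    ← Finset.sum_add_distrib]
  refine Finset.sum_congr rfl fun i _ => ?_
  rw [← Finset.sum_add_distrib]
  refine Finset.sum_congr rfl fun j _ => ?_
  split_ifs <;> simp [sub_eq_add_neg]

def jacobiDefect [CommRing R] (α : ι → ι → R) (p q r : ι) : R :=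
  skewExtend α p q * skewExtend α q r - skewExtend α p q * skewExtend α p r
    - skewExtend α p r * skewExtend α q r

lemma jacobiDefect_swap_left [CommRing R] (α : ι → ι → R) (p q r : ι) :
    jacobiDefect α q p r = jacobiDefect α p q r := by
  simp only [jacobiDefect, skewExtend_swap α p q]
  ring

lemma jacobiDefect_swap_right [CommRing R] (α : ι → ι → R) (p q r : ι) :
    jacobiDefect α p r q = jacobiDefect α p q r := by
  simp only [jacobiDefect, skewExtend_swap α q r]
  ring

lemma jacobiDefect_of_lt [CommRing R] (α : ι → ι → R) {i j k : ι} (hij : i < j) (hjk : j < k) :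
    jacobiDefect α i j k = -(α i j * α i k + α i k * α j k - α i j * α j k) := by
  rw [jacobiDefect, skewExtend_of_lt α hij, skewExtend_of_lt α hjk,
    skewExtend_of_lt α (hij.trans hjk)]
  ring

lemma eq_zero_of_ne_of_swap_invariant [Zero R] (f : ι → ι → ι → R)
    (swap_left : ∀ a b c, f b a c = f a b c) (swap_right : ∀ a b c, f a c b = f a b c)
    (sorted : ∀ i j k, i < j → j < k → f i j k = 0)
    {p q r : ι} (hpq : p ≠ q) (hqr : q ≠ r) (hpr : p ≠ r) : f p q r = 0 := by
  rcases hpq.lt_or_gt with hpq | hqp <;> rcases hqr.lt_or_gt with hqr | hrq <;>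
    rcases hpr.lt_or_gt with hpr | hrp
  · exact sorted p q r hpq hqr
  · exact absurd (hpq.trans hqr) hrp.not_gt
  · rw [← swap_right]; exact sorted p r q hpr hrq
  · rw [← swap_right, ← swap_left]; exact sorted r p q hrp hpq
  · rw [← swap_left]; exact sorted q p r hqp hpr
  · rw [← swap_left, ← swap_right]; exact sorted q r p hqr hrp
  · exact absurd (hrq.trans hqp) hpr.not_gt
  · rw [← swap_left, ← swap_right, ← swap_left]; exact sorted r q p hrq hqp

end SkewExtension

lemma eC_apply (i k : Fin n) : eC n i k = if k = i then 1 else 0 := Pi.single_apply i 1 k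

lemma mul_eC (a : SC n) (i : Fin n) : a * eC n i = a i • eC n i := by
  ext k
  by_cases h : k = i <;> simp [eC_apply, h]

lemma eC_mul (a : SC n) (i : Fin n) : eC n i * a = a i • eC n i := by
  rw [mul_comm, mul_eC]

lemma yC_apply (i j : Fin n) (a : SC n) :
    yC n i j a = (a j - a i) • (eC n i ⊗ₜ[ℂ] eC n j) := by
  simp only [yC, dIn, LinearMap.sub_apply, LinearMap.comp_apply, TensorProduct.mk_apply,
    LinearMap.flip_apply, LinearMap.mulLeft_apply, LinearMap.mulRight_apply,
    Algebra.TensorProduct.tmul_mul_tmul, mul_one, one_mul, eC_mul, mul_eC,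
    TensorProduct.tmul_smul, TensorProduct.smul_tmul', sub_smul, TensorProduct.sub_tmul]

lemma mixer_tmul (x y u v : SC n) :
    mixer n (x ⊗ₜ[ℂ] y) (u ⊗ₜ[ℂ] v) = (u * y) ⊗ₜ[ℂ] (x * v) := by
  simp only [mixer, mixAux, TensorProduct.lift.tmul, LinearMap.mk₂_apply,
    LinearMap.comp_apply, LinearMap.mulLeft_apply, LinearMap.mulRight_apply,
    Algebra.TensorProduct.tmul_mul_tmul, one_mul, mul_one]

lemma bracketOf_yC_apply (i j : Fin n) (a b : SC n) :
    bracketOf n (yC n i j) (yC n j i) a b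
      = ((a j - a i) * (b j - b i)) • (eC n i ⊗ₜ[ℂ] eC n j)
        - ((a i - a j) * (b i - b j)) • (eC n j ⊗ₜ[ℂ] eC n i) := by
  change bracketP n _ _ a b = _
  simp only [bracketP, yC_apply, map_smul, LinearMap.smul_apply, mixer_tmul, eC_mul,
    eC_apply, if_pos, one_smul, smul_smul]
  module

def cycleBracket (α : Fin n → Fin n → ℂ) : SC n →ₗ[ℂ] SC n →ₗ[ℂ] SC n ⊗[ℂ] SC n :=
  ∑ i, ∑ j, if i < j then α i j • bracketOf n (yC n i j) (yC n j i) else 0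

lemma cycleBracket_apply (α : Fin n → Fin n → ℂ) (a b : SC n) :
    cycleBracket n α a b = ∑ p, ∑ q,
      (skewExtend α p q * ((a q - a p) * (b q - b p))) • (eC n p ⊗ₜ[ℂ] eC n q) := by
  let g : Fin n → Fin n → SC n ⊗[ℂ] SC n := fun p q =>
    ((a q - a p) * (b q - b p)) • (eC n p ⊗ₜ[ℂ] eC n q)
  calc cycleBracket n α a b
      = ∑ i, ∑ j, (if i < j then α i j • (g i j - g j i) else 0) := by
        simp only [cycleBracket, LinearMap.sum_apply]
        refine Finset.sum_congr rfl fun i _ => Finset.sum_congr rfl fun j _ => ?_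
        split_ifs <;> simp [bracketOf_yC_apply, g]
    _ = _ := by simp only [sum_ite_lt_smul_sub, g, mul_smul]

def tripleBasis : Module.Basis ((Fin n × Fin n) × Fin n) ℂ ((SC n ⊗[ℂ] SC n) ⊗[ℂ] SC n) :=
  ((Pi.basisFun ℂ (Fin n)).tensorProduct (Pi.basisFun ℂ (Fin n))).tensorProduct
    (Pi.basisFun ℂ (Fin n))

def tripleCoord (p q r : Fin n) : (SC n ⊗[ℂ] SC n) ⊗[ℂ] SC n →ₗ[ℂ] ℂ :=
  Finsupp.lapply ((p, q), r) ∘ₗ (tripleBasis n).repr.toLinearMap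

lemma tripleCoord_tmul (p q r : Fin n) (x y z : SC n) :
    tripleCoord n p q r ((x ⊗ₜ[ℂ] y) ⊗ₜ[ℂ] z) = x p * y q * z r := by
  simp [tripleCoord, tripleBasis, Module.Basis.tensorProduct_repr_tmul_apply, mul_comm]

lemma eq_zero_iff_forall_tripleCoord (T : (SC n ⊗[ℂ] SC n) ⊗[ℂ] SC n) :
    T = 0 ↔ ∀ p q r, tripleCoord n p q r T = 0 := by
  simp [(tripleBasis n).ext_elem_iff, tripleCoord, Prod.forall]

lemma tripleCoord_sigma3 (p q r : Fin n) (T : (SC n ⊗[ℂ] SC n) ⊗[ℂ] SC n) :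
    tripleCoord n p q r (sigma3 n T) = tripleCoord n q r p T := by
  induction T using TensorProduct.induction_on with
  | zero => simp
  | tmul w z =>
    induction w using TensorProduct.induction_on with
    | zero => simp
    | tmul x y =>
      simp only [sigma3, LinearMap.comp_apply, LinearEquiv.coe_coe, TensorProduct.comm_tmul,
        TensorProduct.assoc_symm_tmul, tripleCoord_tmul]
      ring
    | add u v hu hv => simp only [TensorProduct.add_tmul, map_add, hu, hv]
  | add u v hu hv => simp only [map_add, hu, hv]

def jacobiator (B : SC n →ₗ[ℂ] SC n →ₗ[ℂ] SC n ⊗[ℂ] SC n) (a b c : SC n) :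
    (SC n ⊗[ℂ] SC n) ⊗[ℂ] SC n :=
  TensorProduct.map (B a) LinearMap.id (B b c)
    + sigma3 n (TensorProduct.map (B b) LinearMap.id (B c a))
    + sigma3 n (sigma3 n (TensorProduct.map (B c) LinearMap.id (B a b)))

lemma tripleCoord_map_cycleBracket (α : Fin n → Fin n → ℂ) (a b c : SC n) (p q r : Fin n) :
    tripleCoord n p q r
        (TensorProduct.map (cycleBracket n α a) LinearMap.id (cycleBracket n α b c))
      = skewExtend α p q * (a q - a p)
          * (skewExtend α q r * ((b r - b q) * (c r - c q))
              - skewExtend α p r * ((b r - b p) * (c r - c p))) := by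
  rw [cycleBracket_apply n α b c]
  simp only [map_sum, TensorProduct.map_tmul, LinearMap.id_coe, id_eq, cycleBracket_apply n α a,
    TensorProduct.sum_tmul, TensorProduct.smul_tmul', tripleCoord_tmul, eC_apply, Pi.smul_apply,
    smul_eq_mul, mul_ite, mul_one, mul_zero, mul_sub, sub_mul, Finset.sum_sub_distrib,
    Finset.sum_ite_irrel, Finset.sum_const_zero, Finset.sum_ite_eq, Finset.mem_univ, if_true]
  ring

lemma tripleCoord_jacobiator (α : Fin n → Fin n → ℂ) (a b c : SC n) (p q r : Fin n) :
    tripleCoord n p q r (jacobiator n (cycleBracket n α) a b c)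
      = (a q - a p) * (b r - b q) * (c r - c p) * jacobiDefect α p q r := by
  simp only [jacobiator, jacobiDefect, map_add, tripleCoord_sigma3, tripleCoord_map_cycleBracket,
    skewExtend_swap α p r, skewExtend_swap α p q, skewExtend_swap α q r]
  ring

lemma doubleJacobi_cycleBracket_iff (α : Fin n → Fin n → ℂ) :
    DoubleJacobi n (cycleBracket n α)
      ↔ ∀ p q r : Fin n, p ≠ q → q ≠ r → p ≠ r → jacobiDefect α p q r = 0 := by
  change (∀ a b c, jacobiator n (cycleBracket n α) a b c = 0) ↔ _
  simp only [eq_zero_iff_forall_tripleCoord, tripleCoord_jacobiator]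
  constructor
  · intro h p q r hpq hqr hpr
    simpa [eC_apply, hpq, hqr, hpr, hpq.symm, hqr.symm, hpr.symm] using
      h (eC n q) (eC n r) (eC n r) p q r
  · intro h a b c p q r
    by_cases hpq : p = q
    · simp [hpq]
    by_cases hqr : q = r
    · simp [hqr]
    by_cases hpr : p = r
    · simp [hpr]
    rw [h p q r hpq hqr hpr, mul_zero]

/-- For `S = ℂ^n` and `P = ∑_{i<j} α_{ij} y^{ij} y^{ji}`, the associated
double bracket is a double Poisson bracket (i.e. satisfies the double Jacobi identity) if and
only if `α_{ij} α_{ik} + α_{ik} α_{jk} − α_{ij} α_{jk} = 0` for all `i < j < k`. -/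
theorem sum_of_y_cycles_double_poisson_iff (n : ℕ) (α : Fin n → Fin n → ℂ) :
    DoubleJacobi n
        (∑ i, ∑ j, if i < j then α i j • bracketOf n (yC n i j) (yC n j i) else 0) ↔
      ∀ i j k : Fin n, i < j → j < k →
        α i j * α i k + α i k * α j k - α i j * α j k = 0 := by
  change DoubleJacobi n (cycleBracket n α) ↔ _
  rw [doubleJacobi_cycleBracket_iff]
  constructor
  · intro h i j k hij hjk
    have hK := h i j k hij.ne hjk.ne (hij.trans hjk).ne
    rwa [jacobiDefect_of_lt α hij hjk, neg_eq_zero] at hK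
  · intro h p q r hpq hqr hpr
    refine eq_zero_of_ne_of_swap_invariant (jacobiDefect α) (jacobiDefect_swap_left α)
      (jacobiDefect_swap_right α) (fun i j k hij hjk => ?_) hpq hqr hpr
    rw [jacobiDefect_of_lt α hij hjk, h i j k hij hjk, neg_zero]

end
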